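/- Fix k ≥ 1 and M, N ∈ ℕ with M + 1 ≤ N − 1, and let g₀ : [0,1] → ℝ be continuously differentiable with ‖g₀'‖_∞ < ∞, N-times continuously differentiable in a neighborhood of 0, with g₀^{(ℓ)}(0) = 0 for all ℓ = 1, …, M. Define α(k,d) := (2Γ(d/2)/(k·Γ((d−k)/2)·Γ(k/2))) · ∫₀¹ g₀'(r)²·(1−r²)^{(d−2−k)/2}·r^{k−1} dr. Then, with k fixed, α(k,d) = O(d^{−M}) as d → ∞; i.e., there exist C > 0 and d₀ such that α(k,d) ≤ C·d^{−M} for all d ≥ d₀. -/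

import Mathlib

/-!
Since `g₀^{(ℓ)}(0) = 0` for `1 ≤ ℓ ≤ M`, Taylor's theorem applied to `g₀'` near `0`,
together with boundedness of `g₀'` away from `0`, gives `|g₀'(r)| ≤ C r^M` on `[0, 1]`.
Hence the integral is at most `C²` times
`∫₀¹ (1 - r²)^((d-2-k)/2) r^(2M+k-1) dr = B(M + k/2, (d - k)/2) / 2`, and after the Gamma
factors cancel, `α(k, d) ≲ Γ(d/2) / Γ(d/2 + M) ≤ (d/2)^(-M)`.
-/

open MeasureTheory Set
open scoped Nat

theorem Real.integral_rpow_mul_one_sub_rpow {a b : ℝ} (ha : 0 < a) (hb : 0 < b) :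
    ∫ x in (0:ℝ)..1, x ^ (a - 1) * (1 - x) ^ (b - 1) =
      Real.Gamma a * Real.Gamma b / Real.Gamma (a + b) := by
  apply Complex.ofReal_injective
  push_cast [← Complex.Gamma_ofReal]
  rw [← Complex.betaIntegral_eq_Gamma_mul_div _ _ (by simpa) (by simpa), Complex.betaIntegral,
    ← intervalIntegral.integral_ofReal]
  refine intervalIntegral.integral_congr fun x hx => ?_
  rw [uIcc_of_le zero_le_one] at hx
  rw [Complex.ofReal_mul, Complex.ofReal_cpow hx.1, Complex.ofReal_cpow (sub_nonneg.2 hx.2)]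
  push_cast
  rfl

theorem Real.Gamma_mul_pow_le_Gamma_add_nat {x : ℝ} (hx : 0 < x) (n : ℕ) :
    Real.Gamma x * x ^ n ≤ Real.Gamma (x + n) := by
  induction n with
  | zero => simp
  | succ n ih =>
    have hxn : 0 < x + n := by positivity
    calc Real.Gamma x * x ^ (n + 1) = x * (Real.Gamma x * x ^ n) := by ring
      _ ≤ (x + n) * Real.Gamma (x + n) := by
          have := (Real.Gamma_pos_of_pos hx).le
          gcongr
          linarith [n.cast_nonneg (α := ℝ)]
      _ = Real.Gamma (x + (n + 1 : ℕ)) := by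
          rw [Nat.cast_succ, ← add_assoc, Real.Gamma_add_one hxn.ne']

theorem Real.Gamma_div_Gamma_add_nat_le {x : ℝ} (hx : 0 < x) (n : ℕ) :
    Real.Gamma x / Real.Gamma (x + n) ≤ (x ^ n)⁻¹ := by
  rw [div_le_iff₀ (Real.Gamma_pos_of_pos (by positivity)), le_inv_mul_iff₀ (by positivity),
    mul_comm]
  exact Real.Gamma_mul_pow_le_Gamma_add_nat hx n

lemma sq_image_Ioo_zero_one : (fun r : ℝ => r ^ 2) '' Ioo 0 1 = Ioo 0 1 := by
  ext x
  constructor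
  · rintro ⟨r, ⟨h0, h1⟩, rfl⟩
    exact ⟨by positivity, by nlinarith⟩
  · rintro ⟨h0, h1⟩
    exact ⟨√x, ⟨Real.sqrt_pos.2 h0, (Real.sqrt_lt' one_pos).2 (by simpa using h1)⟩,
      Real.sq_sqrt h0.le⟩

lemma setIntegral_Ioo_zero_one_comp_sq (F : ℝ → ℝ) :
    ∫ x in Ioo (0:ℝ) 1, F x = ∫ r in Ioo (0:ℝ) 1, 2 * r * F (r ^ 2) := by
  conv_lhs => rw [← sq_image_Ioo_zero_one]
  rw [integral_image_eq_integral_abs_deriv_smul measurableSet_Ioo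
    (fun r _ => (hasDerivAt_pow 2 r).hasDerivWithinAt) (fun r hr s hs h => ?_) F]
  · refine setIntegral_congr_fun measurableSet_Ioo fun r hr => ?_
    simp [abs_of_pos hr.1]
  · nlinarith [hr.1, hs.1]

theorem integral_one_sub_sq_rpow_mul_pow {e : ℝ} (he : -1 < e) (p : ℕ) :
    ∫ r in (0:ℝ)..1, (1 - r ^ 2) ^ e * r ^ p =
      Real.Gamma ((p + 1) / 2) * Real.Gamma (e + 1) /
        (2 * Real.Gamma ((p + 1) / 2 + (e + 1))) := by
  have hbeta := Real.integral_rpow_mul_one_sub_rpow (a := (p + 1) / 2) (b := e + 1)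
    (by positivity) (by linarith)
  rw [intervalIntegral.integral_of_le zero_le_one, integral_Ioc_eq_integral_Ioo,
    setIntegral_Ioo_zero_one_comp_sq, add_sub_cancel_right] at hbeta
  rw [mul_comm 2, ← div_div, ← hbeta, intervalIntegral.integral_of_le zero_le_one,
    integral_Ioc_eq_integral_Ioo, eq_div_iff two_ne_zero, ← integral_mul_const]
  refine setIntegral_congr_fun measurableSet_Ioo fun r ⟨hr0, _⟩ => ?_
  have : (r ^ 2) ^ (((p:ℝ) + 1) / 2 - 1) * r = r ^ p := by
    rw [← Real.rpow_natCast, ← Real.rpow_mul hr0.le, ← Real.rpow_add_one hr0.ne',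
      ← Real.rpow_natCast r p]
    congr 1
    push_cast
    ring
  rw [← this]
  ring

theorem exists_abs_le_mul_pow_of_iteratedDerivWithin_eq_zero {f : ℝ → ℝ} {a b : ℝ} {m : ℕ}
    (hab : a < b) (hf : ContDiffOn ℝ m f (Icc a b))
    (hvan : ∀ j < m, iteratedDerivWithin j f (Icc a b) a = 0) :
    ∃ C, ∀ x ∈ Icc a b, |f x| ≤ C * (x - a) ^ m := by
  obtain ⟨C, hC⟩ := isCompact_Icc.exists_bound_of_continuousOn
    (hf.continuousOn_iteratedDerivWithin le_rfl (uniqueDiffOn_Icc hab))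
  cases m with
  | zero => exact ⟨C, fun x hx => by simpa using hC x hx⟩
  | succ n =>
    have htaylor : ∀ x, taylorWithinEval f n (Icc a b) a x = 0 := fun x => by
      rw [taylor_within_apply]
      exact Finset.sum_eq_zero fun j hj => by rw [hvan j (Finset.mem_range.1 hj), smul_zero]
    refine ⟨C / n !, fun x hx => ?_⟩
    simpa [htaylor, div_mul_eq_mul_div] using taylor_mean_remainder_bound hab.le hf hx hC

lemma exists_abs_le_mul_pow_of_near_zero {f : ℝ → ℝ} {m : ℕ} {δ C₁ : ℝ} (hδ : 0 < δ)
    (hf : ContinuousOn f (Icc 0 1)) (hnear : ∀ r ∈ Icc 0 δ, |f r| ≤ C₁ * r ^ m) :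
    ∃ C > 0, ∀ r ∈ Icc (0:ℝ) 1, |f r| ≤ C * r ^ m := by
  obtain ⟨B, hB⟩ := isCompact_Icc.exists_bound_of_continuousOn hf
  have hB0 : 0 ≤ B := (abs_nonneg _).trans (hB 0 (left_mem_Icc.2 zero_le_one))
  set C := max (max C₁ (B / δ ^ m)) 1
  refine ⟨C, by positivity, fun r hr => ?_⟩
  rcases le_or_gt r δ with hrδ | hδr
  · calc |f r| ≤ C₁ * r ^ m := hnear r ⟨hr.1, hrδ⟩
      _ ≤ C * r ^ m :=
          mul_le_mul_of_nonneg_right ((le_max_left _ _).trans (le_max_left _ _)) (pow_nonneg hr.1 m)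
  · calc |f r| ≤ B / δ ^ m * δ ^ m := by
          rw [div_mul_cancel₀ _ (by positivity)]
          exact hB r hr
      _ ≤ C * r ^ m := by
          gcongr
          exact (le_max_right _ _).trans (le_max_left _ _)

theorem exists_abs_le_mul_pow_of_iteratedDeriv_eq_zero {g g' : ℝ → ℝ} {U : Set ℝ} {m : ℕ}
    (hg : ∀ r ∈ Icc (0:ℝ) 1, HasDerivWithinAt g (g' r) (Icc 0 1) r)
    (hg' : ContinuousOn g' (Icc 0 1)) (hU : IsOpen U) (h0U : 0 ∈ U)
    (hsmooth : ContDiffOn ℝ (m + 1) g U)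
    (hvan : ∀ ℓ : ℕ, 1 ≤ ℓ → ℓ ≤ m → iteratedDeriv ℓ g 0 = 0) :
    ∃ C > 0, ∀ r ∈ Icc (0:ℝ) 1, |g' r| ≤ C * r ^ m := by
  obtain ⟨ε, hε, hεU⟩ := Metric.nhds_basis_closedBall.mem_iff.1 (hU.mem_nhds h0U)
  set δ := min ε 1
  have hδ : 0 < δ := lt_min hε one_pos
  have hδU : Icc 0 δ ⊆ U := fun r hr => hεU <| by
    rw [Real.closedBall_eq_Icc, zero_sub, zero_add]
    exact ⟨by linarith [hr.1], hr.2.trans (min_le_left _ _)⟩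
  have hderiv : ContDiffOn ℝ m (deriv g) U := hsmooth.deriv_of_isOpen hU le_rfl
  have hg'_eq : ∀ r ∈ Icc 0 δ, g' r = deriv g r := fun r hr => by
    have hr1 : r ∈ Icc (0:ℝ) 1 := ⟨hr.1, hr.2.trans (min_le_right _ _)⟩
    have hdiff : DifferentiableAt ℝ g r :=
      (hsmooth.contDiffAt (hU.mem_nhds (hδU hr))).differentiableAt (by simp)
    exact (uniqueDiffOn_Icc one_pos r hr1).eq_deriv _ (hg r hr1) hdiff.hasDerivAt.hasDerivWithinAt
  have hvan' : ∀ j < m, iteratedDerivWithin j (deriv g) (Icc 0 δ) 0 = 0 := fun j hj => by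
    rw [iteratedDerivWithin_eq_iteratedDeriv (uniqueDiffOn_Icc hδ)
      ((hderiv.contDiffAt (hU.mem_nhds h0U)).of_le (by exact_mod_cast hj.le))
      (left_mem_Icc.2 hδ.le), ← iteratedDeriv_succ']
    exact hvan (j + 1) (Nat.succ_pos j) hj
  obtain ⟨C₁, hC₁⟩ :=
    exists_abs_le_mul_pow_of_iteratedDerivWithin_eq_zero hδ (hderiv.mono hδU) hvan'
  refine exists_abs_le_mul_pow_of_near_zero (C₁ := C₁) hδ hg' fun r hr => ?_
  simpa only [hg'_eq r hr, sub_zero] using hC₁ r hr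

theorem integral_sq_mul_one_sub_sq_rpow_le {f : ℝ → ℝ} {C e : ℝ} {m : ℕ}
    (hf : ContinuousOn f (Icc 0 1)) (hfC : ∀ r ∈ Icc (0:ℝ) 1, |f r| ≤ C * r ^ m)
    (he : 0 ≤ e) (j : ℕ) :
    ∫ r in (0:ℝ)..1, f r ^ 2 * (1 - r ^ 2) ^ e * r ^ j ≤
      C ^ 2 * ∫ r in (0:ℝ)..1, (1 - r ^ 2) ^ e * r ^ (2 * m + j) := by
  have hw : Continuous fun r : ℝ => (1 - r ^ 2) ^ e := by fun_prop (disch := exact he)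
  rw [← intervalIntegral.integral_const_mul]
  refine intervalIntegral.integral_mono_on zero_le_one ?_ ?_ fun r hr => ?_
  · exact ((hf.pow 2).mul hw.continuousOn |>.mul (continuousOn_pow j)).intervalIntegrable_of_Icc
      zero_le_one
  · exact (by fun_prop : Continuous _).intervalIntegrable 0 1
  · have hsq : f r ^ 2 ≤ (C * r ^ m) ^ 2 := by
      rw [← sq_abs]; exact pow_le_pow_left₀ (abs_nonneg _) (hfC r hr) 2
    have hw0 : 0 ≤ (1 - r ^ 2) ^ e * r ^ j :=
      mul_nonneg (Real.rpow_nonneg (by nlinarith [hr.1, hr.2]) e) (pow_nonneg hr.1 j)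
    calc f r ^ 2 * (1 - r ^ 2) ^ e * r ^ j = f r ^ 2 * ((1 - r ^ 2) ^ e * r ^ j) := by ring
      _ ≤ (C * r ^ m) ^ 2 * ((1 - r ^ 2) ^ e * r ^ j) := by gcongr
      _ = C ^ 2 * ((1 - r ^ 2) ^ e * r ^ (2 * m + j)) := by ring

theorem statement19_general
    (k : ℕ) (hk : 1 ≤ k) (M N : ℕ) (hMN : M + 1 ≤ N - 1)
    (g₀ g₀' : ℝ → ℝ)
    (hg₀ : ∀ r ∈ Set.Icc (0 : ℝ) 1, HasDerivWithinAt g₀ (g₀' r) (Set.Icc (0 : ℝ) 1) r)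
    (hcont : ContinuousOn g₀' (Set.Icc (0 : ℝ) 1))
    (U : Set ℝ) (hU : IsOpen U) (h0U : (0 : ℝ) ∈ U)
    (hsmooth : ContDiffOn ℝ N g₀ U)
    (hvanish : ∀ ℓ : ℕ, 1 ≤ ℓ → ℓ ≤ M → iteratedDeriv ℓ g₀ 0 = 0) :
    ∃ C > (0 : ℝ), ∃ d₀ : ℕ, ∀ d : ℕ, d₀ ≤ d →
      2 * Real.Gamma ((d : ℝ) / 2) /
          (k * Real.Gamma (((d : ℝ) - k) / 2) * Real.Gamma ((k : ℝ) / 2)) *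
          ∫ r in (0 : ℝ)..1, (g₀' r) ^ 2 * (1 - r ^ 2) ^ (((d : ℝ) - 2 - k) / 2) *
            r ^ (k - 1) ≤
        C * (d : ℝ) ^ (-(M : ℝ)) := by
  obtain ⟨Cg, hCg, hg₀'⟩ := exists_abs_le_mul_pow_of_iteratedDeriv_eq_zero hg₀ hcont hU h0U
    (hsmooth.of_le (by exact_mod_cast (by omega : M + 1 ≤ N))) hvanish
  have hk0 : (0:ℝ) < k := by exact_mod_cast hk
  set A := Cg ^ 2 * Real.Gamma (M + k / 2) / (k * Real.Gamma (k / 2))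
  have hA : 0 < A := by
    have := Real.Gamma_pos_of_pos (by positivity : (0:ℝ) < M + k / 2)
    have := Real.Gamma_pos_of_pos (by positivity : (0:ℝ) < k / 2)
    positivity
  refine ⟨A * 2 ^ M, by positivity, k + 3, fun d hd => ?_⟩
  have hdk : (k:ℝ) + 3 ≤ d := by exact_mod_cast hd
  have hGdk := Real.Gamma_pos_of_pos (by linarith : (0:ℝ) < (d - k) / 2)
  have hp : (((2 * M + (k - 1) : ℕ) : ℝ) + 1) / 2 = M + k / 2 := by
    push_cast [Nat.cast_sub hk]; ring
  calc _ ≤ 2 * Real.Gamma ((d : ℝ) / 2) /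
          (k * Real.Gamma (((d : ℝ) - k) / 2) * Real.Gamma ((k : ℝ) / 2)) *
          (Cg ^ 2 * ∫ r in (0 : ℝ)..1, (1 - r ^ 2) ^ (((d : ℝ) - 2 - k) / 2) *
            r ^ (2 * M + (k - 1))) := by
        gcongr
        exact integral_sq_mul_one_sub_sq_rpow_le hcont hg₀' (by linarith) (k - 1)
    _ = A * (Real.Gamma ((d : ℝ) / 2) / Real.Gamma ((d : ℝ) / 2 + M)) := by
        rw [integral_one_sub_sq_rpow_mul_pow (by linarith), hp,
          show ((d : ℝ) - 2 - k) / 2 + 1 = (d - k) / 2 by ring,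
          show (M + k / 2 + (d - k) / 2 : ℝ) = d / 2 + M by ring]
        simp only [A]
        field_simp
    _ ≤ A * (((d : ℝ) / 2) ^ M)⁻¹ := by
        gcongr
        exact Real.Gamma_div_Gamma_add_nat_le (by linarith) M
    _ = A * 2 ^ M * (d : ℝ) ^ (-(M : ℝ)) := by
        rw [Real.rpow_neg (by linarith), Real.rpow_natCast, div_pow, inv_div]
        ring

/-- Fix `k ≥ 1` and `M + 1 ≤ N - 1`.  If `g₀ ∈ C¹([0,1])` with bounded
derivative is `N`-times continuously differentiable near `0` and `g₀^{(ℓ)}(0) = 0` for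
`ℓ = 1, …, M`, then
`α(k,d) := (2Γ(d/2)/(k Γ((d-k)/2) Γ(k/2))) ∫₀¹ g₀'(r)² (1-r²)^{(d-2-k)/2} r^{k-1} dr`
satisfies `α(k,d) = O(d^{-M})` as `d → ∞` (with `k` fixed). -/
theorem statement19
    (k : ℕ) (hk : 1 ≤ k) (M N : ℕ) (hMN : M + 1 ≤ N - 1)
    (g₀ g₀' : ℝ → ℝ) (C₂ : ℝ)
    (hg₀ : ∀ r ∈ Set.Icc (0 : ℝ) 1, HasDerivWithinAt g₀ (g₀' r) (Set.Icc (0 : ℝ) 1) r)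
    (hcont : ContinuousOn g₀' (Set.Icc (0 : ℝ) 1))
    (hbound : ∀ r ∈ Set.Icc (0 : ℝ) 1, |g₀' r| ≤ C₂)
    (U : Set ℝ) (hU : IsOpen U) (h0U : (0 : ℝ) ∈ U)
    (hsmooth : ContDiffOn ℝ N g₀ U)
    (hvanish : ∀ ℓ : ℕ, 1 ≤ ℓ → ℓ ≤ M → iteratedDeriv ℓ g₀ 0 = 0) :
    ∃ C > (0 : ℝ), ∃ d₀ : ℕ, ∀ d : ℕ, d₀ ≤ d →
      2 * Real.Gamma ((d : ℝ) / 2) /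
          (k * Real.Gamma (((d : ℝ) - k) / 2) * Real.Gamma ((k : ℝ) / 2)) *
          ∫ r in (0 : ℝ)..1, (g₀' r) ^ 2 * (1 - r ^ 2) ^ (((d : ℝ) - 2 - k) / 2) *
            r ^ (k - 1) ≤
        C * (d : ℝ) ^ (-(M : ℝ)) :=
  statement19_general k hk M N hMN g₀ g₀' hg₀ hcont U hU h0U hsmooth hvanish
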